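/- Let f : ℂ → ℂ be holomorphic on an open set D with Im z ≠ 0 for z ∈ D. Define U : D → ℂ by U(z) = f'(z) - Im f(z) / Im z. Then U satisfies the PDE ∂U/∂z̄ = conj(U) / (z - z̄), where ∂/∂z̄ = (1/2)(∂/∂x + i ∂/∂y) and z̄ denotes the complex conjugate of z. -/

import Mathlib

/-!
`f'` is holomorphic, so its `∂/∂z̄` vanishes (Cauchy–Riemann), and `∂U/∂z̄` is minus the
`∂/∂z̄` of the real function `φ = Im f / Im z`. For a real function, `∂φ/∂z̄ = (φ_x + i φ_y)/2`,
and the quotient rule with `(Im f)_x = Im f'`, `(Im f)_y = Re f'` gives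
`∂φ/∂z̄ = (Im f' + i (Re f' - φ)) / (2 Im z) = -conj (f' - φ) / (z - z̄)`.
-/

/-- The Wirtinger derivative `∂U/∂z̄ = (1/2)(∂_x + i ∂_y) U`. -/
noncomputable def wirtingerZbar (U : ℂ → ℂ) (z : ℂ) : ℂ :=
  (1 / 2 : ℂ) * (fderiv ℝ U z 1 + Complex.I * fderiv ℝ U z Complex.I)

open Complex

section Wirtinger

variable {U V : ℂ → ℂ} {z : ℂ}

theorem wirtingerZbar_sub (hU : DifferentiableAt ℝ U z) (hV : DifferentiableAt ℝ V z) :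
    wirtingerZbar (fun w => U w - V w) z = wirtingerZbar U z - wirtingerZbar V z := by
  simp only [wirtingerZbar, fderiv_fun_sub hU hV, sub_apply]
  ring

theorem fderiv_apply_I : fderiv ℂ U z I = I * deriv U z := by
  rw [← fderiv_apply_one_eq_deriv, ← smul_eq_mul, ← map_smul, smul_eq_mul, mul_one]

theorem DifferentiableAt.wirtingerZbar_eq_zero (hU : DifferentiableAt ℂ U z) :
    wirtingerZbar U z = 0 := by
  simp only [wirtingerZbar, hU.fderiv_restrictScalars ℝ,
    ContinuousLinearMap.coe_restrictScalars', fderiv_apply_I, fderiv_apply_one_eq_deriv,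
    ← mul_assoc, I_mul_I]
  ring

theorem HasFDerivAt.wirtingerZbar_ofReal_comp {φ : ℂ → ℝ} {φ' : ℂ →L[ℝ] ℝ}
    (hφ : HasFDerivAt φ φ' z) :
    wirtingerZbar (fun w => (φ w : ℂ)) z = (1 / 2 : ℂ) * (φ' 1 + I * φ' I) := by
  have h : HasFDerivAt (fun w => (φ w : ℂ)) (ofRealCLM.comp φ') z :=
    ofRealCLM.hasFDerivAt.comp z hφ
  simp [wirtingerZbar, h.fderiv]

end Wirtinger

theorem conj_sub_ofReal_div_sub_conj (a z : ℂ) (s : ℝ) (hz : z.im ≠ 0) :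
    starRingEnd ℂ (a - ((s / z.im : ℝ) : ℂ)) / (z - starRingEnd ℂ z)
      = -((a.im : ℂ) + I * (a.re - s / z.im)) / (2 * z.im) := by
  have hz' : (z.im : ℂ) ≠ 0 := ofReal_ne_zero.mpr hz
  have hconj : starRingEnd ℂ a = a.re - a.im * I := by
    apply Complex.ext <;> simp
  rw [sub_conj, map_sub, conj_ofReal, hconj]
  push_cast
  field_simp
  ring_nf
  simp only [I_sq]
  ring

theorem wirtingerZbar_ofReal_im_div_im {f : ℂ → ℂ} {z : ℂ} (hf : DifferentiableAt ℂ f z)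
    (hz : z.im ≠ 0) :
    wirtingerZbar (fun w => (((f w).im / w.im : ℝ) : ℂ)) z
      = -starRingEnd ℂ (deriv f z - (((f z).im / z.im : ℝ) : ℂ)) / (z - starRingEnd ℂ z) := by
  have him_f : HasFDerivAt (fun w => (f w).im)
      (imCLM.comp ((fderiv ℂ f z).restrictScalars ℝ)) z :=
    imCLM.hasFDerivAt.comp z (hf.hasFDerivAt.restrictScalars ℝ)
  have hinv_im : HasFDerivAt (fun w : ℂ => w.im⁻¹) _ z :=
    (hasFDerivAt_inv hz).comp z imCLM.hasFDerivAt
  have hφ := him_f.fun_mul hinv_im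
  simp only [← div_eq_mul_inv] at hφ
  have hz' : (z.im : ℂ) ≠ 0 := ofReal_ne_zero.mpr hz
  rw [hφ.wirtingerZbar_ofReal_comp, neg_div, conj_sub_ofReal_div_sub_conj _ _ _ hz, neg_div,
    neg_neg]
  simp only [one_div, add_apply, smul_apply, ContinuousLinearMap.comp_apply, imCLM_apply,
    ContinuousLinearMap.toSpanSingleton_apply, ContinuousLinearMap.coe_restrictScalars',
    fderiv_eq_smul_deriv, smul_eq_mul, one_mul, one_im, I_im, I_re, mul_im, mul_neg,
    zero_mul, neg_zero, mul_zero, zero_add, ofReal_mul, ofReal_inv, ofReal_add, ofReal_neg,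
    ofReal_pow]
  field_simp
  ring

/-- If `f` is holomorphic on an open set `D` on which `Im z ≠ 0`, then
`U = f' - Im f / Im z` solves the PDE `∂U/∂z̄ = conj(U)/(z - z̄)`. -/
theorem stmt7 (D : Set ℂ) (hD : IsOpen D) (f : ℂ → ℂ)
    (hf : ∀ z ∈ D, DifferentiableAt ℂ f z)
    (hz : ∀ z ∈ D, z.im ≠ 0) :
    let U : ℂ → ℂ := fun z => deriv f z - (((f z).im / z.im : ℝ) : ℂ)
    ∀ z ∈ D, wirtingerZbar U z = (starRingEnd ℂ) (U z) / (z - (starRingEnd ℂ) z) := by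
  intro U z hzD
  have hf' : DifferentiableAt ℂ (deriv f) z :=
    (DifferentiableOn.analyticOnNhd (fun w hw => (hf w hw).differentiableWithinAt) hD
      |>.deriv z hzD).differentiableAt
  have hφ : DifferentiableAt ℝ (fun w => (((f w).im / w.im : ℝ) : ℂ)) z := by
    have := (hf z hzD).restrictScalars ℝ
    have := hz z hzD
    fun_prop (disch := assumption)
  calc wirtingerZbar U z
      = wirtingerZbar (deriv f) z - wirtingerZbar (fun w => (((f w).im / w.im : ℝ) : ℂ)) z :=
        wirtingerZbar_sub (hf'.restrictScalars ℝ) hφ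
    _ = (starRingEnd ℂ) (U z) / (z - (starRingEnd ℂ) z) := by
        rw [hf'.wirtingerZbar_eq_zero, wirtingerZbar_ofReal_im_div_im (hf z hzD) (hz z hzD),
          zero_sub, neg_div, neg_neg]
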